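/- arXiv:2504.11960 — 2 statements merged into one kernel-verified Lean document; each statement's English description precedes it below -/
import Mathlib

section
/- Let gcd(q,n) = 1 and r ≢ 1 (mod n) with r^m ≡ 1 (mod n), and let τ: F_q G_{n,m,r} → ⊕_{i=1}^{ω} M_{s_i}(R_i) be the decomposition isomorphism, where R_i = F_q[α_i]B_i if α_i = α_i^{r^{s_i}} and R_i = F_q[α_i] ∗_{θ_i} B_i otherwise. Then every left ideal C of F_q G_{n,m,r} satisfies τ(C) = ⊕_{i=1}^{ω} I_{s_i}(L_i) for a uniquely determined family of left R_i-submodules L_i ⊆ R_i^{s_i}, and conversely every such family yields a left ideal. -/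
open scoped BigOperators

/-- The skew group algebra `K ∗_θ G`: the `K`-vector space with basis `G` and
multiplication extending `g·λ = (θ g λ)·g`.  We realize it as functions `G → K`
(with `G` finite), where an element `Σ_g λ_g g` is the function `g ↦ λ_g`. -/
def SkewGA (R : Type*) [CommRing R] (K : Type*) [Field K] [Algebra R K]
    (G : Type*) [Group G] [Fintype G] (θ : G →* (K ≃ₐ[R] K)) : Type _ :=
  G → K

namespace SkewGA

variable {R : Type*} [CommRing R] {K : Type*} [Field K] [Algebra R K]
variable {G : Type*} [Group G] [Fintype G] [DecidableEq G] (θ : G →* (K ≃ₐ[R] K))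

instance : AddCommGroup (SkewGA R K G θ) := inferInstanceAs (AddCommGroup (G → K))

instance : Mul (SkewGA R K G θ) :=
  ⟨fun x y => (fun g => ∑ h : G, x h * θ h (y (h⁻¹ * g)) : G → K)⟩

lemma mul_def (x y : SkewGA R K G θ) (g : G) :
    (x * y) g = ∑ h : G, x h * θ h (y (h⁻¹ * g)) := rfl

instance : One (SkewGA R K G θ) :=
  ⟨(fun g => if g = 1 then 1 else 0 : G → K)⟩

lemma one_def (g : G) : (1 : SkewGA R K G θ) g = if g = 1 then 1 else 0 := rfl

instance instRing : Ring (SkewGA R K G θ) where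
  __ := (inferInstance : AddCommGroup (G → K))
  left_distrib x y z := by
    funext g
    show ∑ h : G, x h * θ h (y (h⁻¹ * g) + z (h⁻¹ * g)) = _
    show _ = (∑ h : G, x h * θ h (y (h⁻¹ * g))) + ∑ h : G, x h * θ h (z (h⁻¹ * g))
    rw [← Finset.sum_add_distrib]
    refine Finset.sum_congr rfl fun h _ => ?_
    rw [map_add, mul_add]
  right_distrib x y z := by
    funext g
    show ∑ h : G, (x h + y h) * θ h (z (h⁻¹ * g)) = _
    show _ = (∑ h : G, x h * θ h (z (h⁻¹ * g))) + ∑ h : G, y h * θ h (z (h⁻¹ * g))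
    rw [← Finset.sum_add_distrib]
    refine Finset.sum_congr rfl fun h _ => ?_
    rw [add_mul]
  zero_mul x := by
    funext g
    show ∑ h : G, (0 : K) * θ h (x (h⁻¹ * g)) = 0
    simp
  mul_zero x := by
    funext g
    show ∑ h : G, x h * θ h (0 : K) = 0
    simp
  mul_assoc x y z := by
    funext g
    show ∑ h : G, (∑ k : G, x k * θ k (y (k⁻¹ * h))) * θ h (z (h⁻¹ * g))
      = ∑ k : G, x k * θ k (∑ u : G, y u * θ u (z (u⁻¹ * (k⁻¹ * g))))
    simp only [Finset.sum_mul, map_sum, Finset.mul_sum, map_mul, AlgEquiv.mul_apply]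
    rw [Finset.sum_comm]
    refine Finset.sum_congr rfl fun k _ => ?_
    rw [← Equiv.sum_comp (Equiv.mulLeft k) (fun h => x k * θ k (y (k⁻¹ * h)) * θ h (z (h⁻¹ * g)))]
    refine Finset.sum_congr rfl fun u _ => ?_
    simp only [Equiv.coe_mulLeft, inv_mul_cancel_left, map_mul θ, AlgEquiv.mul_apply,
      mul_inv_rev, mul_assoc]
  one_mul x := by
    funext g
    show ∑ h : G, (if h = 1 then (1:K) else 0) * θ h (x (h⁻¹ * g)) = x g
    rw [Finset.sum_eq_single 1]
    · simp
    · intro h _ hh; simp [hh]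
    · intro h; simp at h
  mul_one x := by
    funext g
    show ∑ h : G, x h * θ h (if h⁻¹ * g = 1 then (1:K) else 0) = x g
    rw [Finset.sum_eq_single g]
    · simp
    · intro h _ hh
      rw [if_neg (by simp [inv_mul_eq_one, hh])]
      simp
    · intro h; simp at h

instance instAlgebra : Algebra R (SkewGA R K G θ) :=
  RingHom.toAlgebra'
    { toFun := fun c => (fun g => if g = 1 then algebraMap R K c else 0 : G → K)
      map_one' := by
        funext g
        show (if g = 1 then algebraMap R K (1 : R) else 0) = (if g = 1 then (1:K) else 0)
        rw [map_one]
      map_mul' := by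
        intro c d
        funext g
        show (if g = 1 then algebraMap R K (c * d) else 0)
          = ∑ h : G, (if h = 1 then algebraMap R K c else 0) *
              θ h (if h⁻¹ * g = 1 then algebraMap R K d else 0)
        rw [Finset.sum_eq_single 1]
        · simp [map_mul]
        · intro h _ hh; simp [hh]
        · intro h; simp at h
      map_zero' := by
        funext g
        show (if g = 1 then algebraMap R K (0 : R) else 0) = 0
        split <;> simp
      map_add' := by
        intro c d
        funext g
        show (if g = 1 then algebraMap R K (c + d) else 0)
          = (if g = 1 then algebraMap R K c else 0) + (if g = 1 then algebraMap R K d else 0)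
        split <;> simp }
    (by
      intro c x
      funext g
      show ∑ h : G, (if h = 1 then algebraMap R K c else 0) * θ h (x (h⁻¹ * g))
        = ∑ h : G, x h * θ h (if h⁻¹ * g = 1 then algebraMap R K c else 0)
      rw [Finset.sum_eq_single 1, Finset.sum_eq_single g]
      · simp [mul_comm]
      · intro h _ hh
        rw [if_neg (by simp [inv_mul_eq_one, hh])]
        simp
      · intro h; simp at h
      · intro h _ hh; simp [hh]
      · intro h; simp at h)

/-- The image of a scalar `λ ∈ K` in the skew group algebra (i.e. `λ·e`). -/
def ofK (lam : K) : SkewGA R K G θ := (fun g => if g = 1 then lam else 0 : G → K)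

/-- The image of a group element `g₀ ∈ G` in the skew group algebra. -/
def ofG (g₀ : G) : SkewGA R K G θ := (fun g => if g = g₀ then 1 else 0 : G → K)

/-- The fixed field `k = {μ ∈ K ∣ ∀ g, θ g μ = μ}`. -/
def fixedSubfield : Subfield K where
  carrier := {mu : K | ∀ g : G, θ g mu = mu}
  mul_mem' := by intro a b ha hb g; rw [map_mul, ha g, hb g]
  one_mem' := by intro g; rw [map_one]
  add_mem' := by intro a b ha hb g; rw [map_add, ha g, hb g]
  zero_mem' := by intro g; rw [map_zero]
  neg_mem' := by intro a ha g; rw [map_neg, ha g]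
  inv_mem' := by intro a ha g; rw [map_inv₀, ha g]

/-- The skew group algebra is an algebra over the fixed field. -/
noncomputable instance instAlgebraFixed : Algebra (fixedSubfield θ) (SkewGA R K G θ) :=
  RingHom.toAlgebra'
    { toFun := fun c => (fun g => if g = 1 then (c : K) else 0 : G → K)
      map_one' := rfl
      map_mul' := by
        intro c d
        funext g
        show (if g = 1 then ((c * d : fixedSubfield θ) : K) else 0)
          = ∑ h : G, (if h = 1 then (c : K) else 0) * θ h (if h⁻¹ * g = 1 then (d : K) else 0)
        rw [Finset.sum_eq_single 1]
        · simp
        · intro h _ hh; simp [hh]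
        · intro h; simp at h
      map_zero' := by
        funext g
        show (if g = 1 then ((0 : fixedSubfield θ) : K) else 0) = 0
        split <;> simp
      map_add' := by
        intro c d
        funext g
        show (if g = 1 then ((c + d : fixedSubfield θ) : K) else 0)
          = (if g = 1 then (c : K) else 0) + (if g = 1 then (d : K) else 0)
        split <;> simp }
    (by
      intro c x
      funext g
      show ∑ h : G, (if h = 1 then (c : K) else 0) * θ h (x (h⁻¹ * g))
        = ∑ h : G, x h * θ h (if h⁻¹ * g = 1 then (c : K) else 0)
      rw [Finset.sum_eq_single 1, Finset.sum_eq_single g]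
      · have hc : θ g (c : K) = (c : K) := c.2 g
        simp [hc, mul_comm]
      · intro h _ hh
        rw [if_neg (by simp [inv_mul_eq_one, hh])]
        simp
      · intro h; simp at h
      · intro h _ hh; simp [hh]
      · intro h; simp at h)

end SkewGA

open Polynomial IntermediateField

/-- The defining relations of the split metacyclic group
`G_{n,m,r} = ⟨a, b ∣ aⁿ = bᵐ = e, b a = aʳ b⟩`. -/
def metacyclicRels (n m r : ℕ) : Set (FreeGroup (Fin 2)) :=
  {FreeGroup.of 0 ^ n, FreeGroup.of 1 ^ m,
    FreeGroup.of 1 * FreeGroup.of 0 * (FreeGroup.of 0 ^ r * FreeGroup.of 1)⁻¹}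

/-- The split metacyclic group `G_{n,m,r}`. -/
def Metacyclic (n m r : ℕ) : Type := PresentedGroup (metacyclicRels n m r)

instance (n m r : ℕ) : Group (Metacyclic n m r) :=
  inferInstanceAs (Group (PresentedGroup (metacyclicRels n m r)))

/-- The generator `a` of `G_{n,m,r}`. -/
def aGen (n m r : ℕ) : Metacyclic n m r := PresentedGroup.of 0

/-- The generator `b` of `G_{n,m,r}`. -/
def bGen (n m r : ℕ) : Metacyclic n m r := PresentedGroup.of 1



section IdealDecomp

variable {ι : Type*} [Fintype ι] [DecidableEq ι]
variable {κ : ι → Type*} [∀ i, Fintype (κ i)] [∀ i, DecidableEq (κ i)]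
variable {R : ι → Type*} [∀ i, Ring (R i)]

/-- The element of the product of matrix rings with row `v` at index `i`, row `j`,
and zeros elsewhere. -/
def mrow (i : ι) (j : κ i) (v : κ i → R i) :
    ∀ i', Matrix (κ i') (κ i') (R i') :=
  Pi.single i ((0 : Matrix (κ i) (κ i) (R i)).updateRow j v)

lemma single_mul_left (i : ι) (M : Matrix (κ i) (κ i) (R i))
    (x : ∀ i', Matrix (κ i') (κ i') (R i')) :
    Pi.single i M * x = Pi.single i (M * x i) := by
  funext i'
  rcases eq_or_ne i' i with rfl | h
  · simp [Pi.mul_apply]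
  · simp [Pi.mul_apply, Pi.single_eq_of_ne h]

lemma stdBasis_mul (i : ι) (j j' : κ i) (c : R i) (M : Matrix (κ i) (κ i) (R i)) :
    Matrix.single j j' c * M
      = (0 : Matrix (κ i) (κ i) (R i)).updateRow j (c • M j') := by
  ext a b
  rw [Matrix.mul_apply, Matrix.updateRow_apply]
  rcases eq_or_ne a j with rfl | h
  · rw [if_pos rfl, Finset.sum_eq_single j']
    · simp [Matrix.single]
    · intro k _ hk; simp [Matrix.single, Ne.symm hk]
    · simp
  · rw [if_neg h]
    refine Finset.sum_eq_zero fun k _ => ?_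
    simp [Matrix.single, Ne.symm h]

lemma single_std_mul (i : ι) (j j' : κ i) (c : R i)
    (x : ∀ i', Matrix (κ i') (κ i') (R i')) :
    Pi.single i (Matrix.single j j' c) * x = mrow i j (c • x i j') := by
  rw [single_mul_left, stdBasis_mul]; rfl

lemma mrow_zero (i : ι) (j : κ i) : mrow i j (0 : κ i → R i) = 0 := by
  unfold mrow
  rw [show (0 : Matrix (κ i) (κ i) (R i)).updateRow j 0 = 0 from by
    ext a b; rw [Matrix.updateRow_apply]; split <;> rfl]
  exact Pi.single_zero i

lemma mrow_add (i : ι) (j : κ i) (v w : κ i → R i) :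
    mrow i j (v + w) = mrow i j v + mrow i j w := by
  unfold mrow
  rw [show (0 : Matrix (κ i) (κ i) (R i)).updateRow j (v + w)
      = (0 : Matrix (κ i) (κ i) (R i)).updateRow j v
        + (0 : Matrix (κ i) (κ i) (R i)).updateRow j w from by
    ext a b
    simp only [Matrix.add_apply, Matrix.updateRow_apply]
    split <;> simp]
  exact Pi.single_add i _ _

lemma mrow_smul_mem (S : Set (∀ i', Matrix (κ i') (κ i') (R i')))
    (hmul : ∀ (y : ∀ i', Matrix (κ i') (κ i') (R i')) ⦃x⦄, x ∈ S → y * x ∈ S)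
    (i : ι) (j j' : κ i) (c : R i) (v : κ i → R i) (hv : mrow i j' v ∈ S) :
    mrow i j (c • v) ∈ S := by
  have h := hmul (Pi.single i (Matrix.single j j' c)) hv
  rw [single_std_mul] at h
  have h2 : (mrow i j' v) i j' = v := by
    rw [mrow, Pi.single_eq_same, Matrix.updateRow_self]
  rwa [h2] at h

lemma eq_sum_mrow (x : ∀ i', Matrix (κ i') (κ i') (R i')) :
    x = ∑ i, ∑ j, mrow i j (x i j) := by
  funext i'
  have h1 : (∑ i, ∑ j, mrow i j (x i j)) i' = ∑ i, (∑ j, mrow i j (x i j)) i' :=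
    Finset.sum_apply _ _ _
  rw [h1, Finset.sum_eq_single i']
  · rw [Finset.sum_apply]
    ext a b
    rw [Matrix.sum_apply]
    simp only [mrow, Pi.single_eq_same, Matrix.updateRow_apply, Matrix.zero_apply]
    rw [Finset.sum_ite_eq]
    simp
  · intro i _ hi
    rw [Finset.sum_apply]
    refine Finset.sum_eq_zero fun j _ => Pi.single_eq_of_ne (Ne.symm hi) _
  · simp

lemma mem_iff_mrow_mem (L : ∀ i, Submodule (R i) (κ i → R i)) (i : ι) (j : κ i) (v : κ i → R i) :
    (∀ i' j', mrow i j v i' j' ∈ L i') ↔ v ∈ L i := by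
  constructor
  · intro h
    have h2 := h i j
    rwa [mrow, Pi.single_eq_same, Matrix.updateRow_self] at h2
  · intro hv i' j'
    rcases eq_or_ne i' i with rfl | h
    · rw [mrow, Pi.single_eq_same]
      rcases eq_or_ne j' j with rfl | hj
      · rw [Matrix.updateRow_self]; exact hv
      · rw [Matrix.updateRow_ne hj]; exact (L i').zero_mem
    · rw [mrow, Pi.single_eq_of_ne h]
      exact (L i').zero_mem

lemma rowSet_mul_mem (L : ∀ i, Submodule (R i) (κ i → R i))
    (y x : ∀ i', Matrix (κ i') (κ i') (R i')) (hx : ∀ i j, x i j ∈ L i) (i : ι) (j : κ i) :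
    (y * x) i j ∈ L i := by
  have h : (y * x) i j = ∑ k, y i j k • x i k := by
    funext j'
    rw [Pi.mul_apply, Matrix.mul_apply, Finset.sum_apply]
    rfl
  rw [h]
  exact Submodule.sum_smul_mem (L i) _ fun k _ => hx i k

theorem exists_unique_rowModules [∀ i, Nonempty (κ i)]
    (S : Set (∀ i', Matrix (κ i') (κ i') (R i')))
    (h0 : (0 : ∀ i', Matrix (κ i') (κ i') (R i')) ∈ S)
    (hadd : ∀ ⦃x y⦄, x ∈ S → y ∈ S → x + y ∈ S)
    (hmul : ∀ (y : ∀ i', Matrix (κ i') (κ i') (R i')) ⦃x⦄, x ∈ S → y * x ∈ S) :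
    ∃! L : ∀ i, Submodule (R i) (κ i → R i),
      S = {x | ∀ i j, x i j ∈ L i} := by
  classical
  have j₀ : ∀ i, κ i := fun i => Classical.arbitrary (κ i)
  refine ⟨fun i =>
    { carrier := {v | mrow i (j₀ i) v ∈ S}
      zero_mem' := by
        show mrow i (j₀ i) (0 : κ i → R i) ∈ S
        rw [mrow_zero]; exact h0
      add_mem' := fun {v w} hv hw => by
        show mrow i (j₀ i) (v + w) ∈ S
        rw [mrow_add]; exact hadd hv hw
      smul_mem' := fun c v hv => mrow_smul_mem S hmul i (j₀ i) (j₀ i) c v hv },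
    ?_, ?_⟩
  · ext x
    simp only [Set.mem_setOf_eq, Submodule.mem_mk, AddSubmonoid.mem_mk, AddSubsemigroup.mem_mk]
    constructor
    · intro hx i j
      show mrow i (j₀ i) (x i j) ∈ S
      have h2 := hmul (Pi.single i (Matrix.single (j₀ i) j 1)) hx
      rwa [single_std_mul, one_smul] at h2
    · intro hx
      rw [eq_sum_mrow x]
      refine Finset.sum_induction _ (· ∈ S) (fun a b ha hb => hadd ha hb) h0 fun i _ => ?_
      refine Finset.sum_induction _ (· ∈ S) (fun a b ha hb => hadd ha hb) h0 fun j _ => ?_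
      have h2 := mrow_smul_mem S hmul i j (j₀ i) 1 (x i j) (hx i j)
      rwa [one_smul] at h2
  · intro L' hL'
    have hme : ∀ (i : ι) (v : κ i → R i), v ∈ L' i ↔ mrow i (j₀ i) v ∈ S := by
      intro i v
      rw [hL']
      exact (mem_iff_mrow_mem L' i (j₀ i) v).symm
    funext i
    ext v
    rw [hme i v]
    rfl

end IdealDecomp

set_option maxHeartbeats 2000000

/-- **Theorem 2.** Let `gcd(q,n) = 1`, `r ≢ 1 (mod n)`, `r^m ≡ 1 (mod n)`,
and let `τ : F_q G_{n,m,r} ≅ ⊕_i M_{s_i}(R_i)` be the decomposition isomorphism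
(characterized by its values on the generators `a, b`).  Then every left ideal `C` of
`F_q G_{n,m,r}` satisfies `τ(C) = ⊕_i I_{s_i}(L_i)` for a uniquely determined family of
left `R_i`-submodules `L_i ⊆ R_i^{s_i}`, and conversely every such family yields a left
ideal. -/
theorem metacyclic_code_decomposition
    (F : Type) [Field F] [Fintype F] (n m r : ℕ)
    (hn : 0 < n) (hm : 0 < m)
    (hq : Nat.Coprime n (Fintype.card F))
    (hrm : r ^ m ≡ 1 [MOD n]) (hr1 : ¬ r ≡ 1 [MOD n])
    (ω : ℕ) (f : Fin ω → F[X]) (s u k : Fin ω → ℕ) [∀ i, NeZero (u i)]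
    (α : Fin ω → (HSub.hSub (X ^ n : F[X]) 1 : F[X]).SplittingField)
    (hmonic : ∀ i, (f i).Monic) (hirr : ∀ i, Irreducible (f i))
    (hdvd : ∀ i, f i ∣ X ^ n - 1) (hroot : ∀ i, Polynomial.aeval (α i) (f i) = 0)
    (hspos : ∀ i, 0 < s i) (hsdvd : ∀ i, s i ∣ m)
    (hstab : ∀ i, minpoly F (α i ^ r ^ s i) = f i)
    (hsmin : ∀ i, ∀ l, 0 < l → l < s i → minpoly F (α i ^ r ^ l) ≠ f i)
    (hu : ∀ i, s i * u i = m)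
    (hrep : ∀ g : F[X], g.Monic → Irreducible g → g ∣ X ^ n - 1 →
      ∃! i : Fin ω, ∃ l : ℕ, g = minpoly F (α i ^ r ^ l))
    (θ : (i : Fin ω) → Multiplicative (ZMod (u i)) →* (F⟮α i⟯ ≃ₐ[F] F⟮α i⟯))
    (hk : ∀ i, Fintype.card F ^ k i ≡ r ^ s i [MOD orderOf (α i)])
    (hθ : ∀ i (x : F⟮α i⟯),
      θ i (Multiplicative.ofAdd (1 : ZMod (u i))) x = x ^ Fintype.card F ^ k i)
    -- `τ` is the decomposition isomorphism of Theorem 1: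
    (τ : MonoidAlgebra F (Metacyclic n m r) ≃ₐ[F]
      ((i : Fin ω) → Matrix (Fin (s i)) (Fin (s i))
        (SkewGA F F⟮α i⟯ (Multiplicative (ZMod (u i))) (θ i))))
    (hτa : ∀ i, τ (MonoidAlgebra.of F (Metacyclic n m r) (aGen n m r)) i =
      Matrix.diagonal fun j : Fin (s i) =>
        SkewGA.ofK (θ i) (IntermediateField.AdjoinSimple.gen F (α i) ^ r ^ (j : ℕ)))
    (hτb : ∀ i, τ (MonoidAlgebra.of F (Metacyclic n m r) (bGen n m r)) i =
      Matrix.of fun j j' : Fin (s i) =>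
        if (j : ℕ) + 1 = s i then
          (if (j' : ℕ) = 0 then SkewGA.ofG (θ i) (Multiplicative.ofAdd (1 : ZMod (u i)))
           else 0)
        else (if (j' : ℕ) = (j : ℕ) + 1 then 1 else 0)) :
    -- every left ideal decomposes as `⊕_i I_{s_i}(L_i)` for a unique family `L_i`:
    (∀ C : Submodule (MonoidAlgebra F (Metacyclic n m r))
        (MonoidAlgebra F (Metacyclic n m r)),
      ∃! L : (i : Fin ω) → Submodule
          (SkewGA F F⟮α i⟯ (Multiplicative (ZMod (u i))) (θ i))
          (Fin (s i) → SkewGA F F⟮α i⟯ (Multiplicative (ZMod (u i))) (θ i)),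
        (⇑τ '' (C : Set (MonoidAlgebra F (Metacyclic n m r)))) =
          {x | ∀ i (j : Fin (s i)), (fun j' => x i j j') ∈ L i}) ∧
    -- conversely, every family of submodules yields a left ideal:
    (∀ L : (i : Fin ω) → Submodule
        (SkewGA F F⟮α i⟯ (Multiplicative (ZMod (u i))) (θ i))
        (Fin (s i) → SkewGA F F⟮α i⟯ (Multiplicative (ZMod (u i))) (θ i)),
      ∃ C : Submodule (MonoidAlgebra F (Metacyclic n m r))
          (MonoidAlgebra F (Metacyclic n m r)),
        (C : Set (MonoidAlgebra F (Metacyclic n m r))) =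
          ⇑τ ⁻¹' {x | ∀ i (j : Fin (s i)), (fun j' => x i j j') ∈ L i}) := by
  classical
  haveI : ∀ i, Nonempty (Fin (s i)) := fun i => ⟨⟨0, hspos i⟩⟩
  constructor
  · intro C
    refine exists_unique_rowModules (⇑τ '' (C : Set _)) ⟨0, C.zero_mem, map_zero τ⟩ ?_ ?_
    · rintro x y ⟨c, hc, rfl⟩ ⟨d, hd, rfl⟩
      exact ⟨c + d, C.add_mem hc hd, map_add τ c d⟩
    · rintro y x ⟨c, hc, rfl⟩
      refine ⟨τ.symm y * c, ?_, ?_⟩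
      · have h := C.smul_mem (τ.symm y) hc
        rwa [smul_eq_mul] at h
      · rw [map_mul, AlgEquiv.apply_symm_apply]
  · intro L
    refine ⟨{ carrier := ⇑τ ⁻¹' {x | ∀ i (j : Fin (s i)), (fun j' => x i j j') ∈ L i}
              add_mem' := ?_
              zero_mem' := ?_
              smul_mem' := ?_ }, rfl⟩
    · intro a b ha hb
      have h : τ (a + b) = τ a + τ b := map_add τ a b
      show τ (a + b) ∈ {x | ∀ i (j : Fin (s i)), (fun j' => x i j j') ∈ L i}
      rw [h]
      intro i j
      exact (L i).add_mem (ha i j) (hb i j)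
    · show τ 0 ∈ {x | ∀ i (j : Fin (s i)), (fun j' => x i j j') ∈ L i}
      have h0 : τ (0 : MonoidAlgebra F (Metacyclic n m r)) = 0 := map_zero τ
      rw [h0]
      intro i j
      exact (L i).zero_mem
    · intro a c hc
      have h : τ (a • c) = τ a * τ c := by rw [smul_eq_mul, map_mul]
      show τ (a • c) ∈ {x | ∀ i (j : Fin (s i)), (fun j' => x i j j') ∈ L i}
      rw [h]
      intro i j
      exact rowSet_mul_mem L (τ a) (τ c) hc i j
end

section
/- Let G be a finite group with subgroups H₁, H₂ such that G = H₁H₂ and H₁ ∩ H₂ = {e}. Let C₁ ⊆ F_qH₁ be a left H₁-code and C₂ ⊆ F_qH₂ a left H₂-code, and set C = C₁^G ∩ C₂^G. Then the minimum distance satisfies d(C) ≥ d(C₁)·d(C₂), and the dimension satisfies dim(C) ≥ |H₁|·dim(C₂) + |H₂|·dim(C₁) − |G|. -/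
open scoped Pointwise

/-- The natural embedding `F_qH → F_qG` for a subgroup `H ≤ G`. -/
noncomputable def embH {F : Type*} [Field F] {G : Type*} [Group G] (H : Subgroup G) :
    MonoidAlgebra F H →ₐ[F] MonoidAlgebra F G :=
  MonoidAlgebra.mapDomainAlgHom F F H.subtype

/-- The induced `G`-code `C^G = (F_qG)·C` of a left `H`-code `C ⊆ F_qH`. -/
noncomputable def inducedCode {F : Type*} [Field F] {G : Type*} [Group G] (H : Subgroup G)
    (C : Submodule (MonoidAlgebra F H) (MonoidAlgebra F H)) :
    Submodule (MonoidAlgebra F G) (MonoidAlgebra F G) :=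
  Submodule.span (MonoidAlgebra F G) (embH H '' C)

/-- Minimum Hamming distance (in `ℕ∞`, `⊤` if there is no nonzero codeword) of a set of
codewords. -/
noncomputable def dmin {α M : Type*} [Zero M] (S : Set (α →₀ M)) : ℕ∞ :=
  sInf {w | ∃ u ∈ S, u ≠ 0 ∧ w = (u.support.card : ℕ∞)}

section Aux

variable {F : Type*} [Field F] {G : Type*} [Group G] {K H : Subgroup G}

/-- Decomposition of `F_qG` along the bijection `K × H ≃ G`. -/
noncomputable def theta (K H : Subgroup G) (E : (K × H) ≃ G) :
    MonoidAlgebra F G ≃ₗ[F] (K →₀ MonoidAlgebra F H) :=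
  (MonoidAlgebra.coeffLinearEquiv F).trans ((Finsupp.domLCongr E.symm).trans
    ((Finsupp.finsuppProdLEquiv F).trans
      (Finsupp.mapRange.linearEquiv (MonoidAlgebra.coeffLinearEquiv F).symm)))

lemma theta_apply (E : (K × H) ≃ G) (u : MonoidAlgebra F G) (t : K) (h : H) :
    (theta (F := F) K H E u t).coeff h = u.coeff (E (t, h)) := by
  show (Finsupp.curry ((Finsupp.domLCongr (M := F) (R := F) E.symm) u.coeff)) t h = _
  rw [Finsupp.curry_apply, Finsupp.domLCongr_apply, Finsupp.domCongr_apply,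
    Finsupp.equivMapDomain_apply, Equiv.symm_symm]

lemma embH_apply_coe (c : MonoidAlgebra F H) (h : H) : (embH H c).coeff ↑h = c.coeff h := by
  show Finsupp.mapDomain (H.subtype) c.coeff (H.subtype h) = c.coeff h
  exact Finsupp.mapDomain_apply H.subtype_injective c.coeff h

lemma embH_apply_of_not_mem (c : MonoidAlgebra F H) {g : G} (hg : g ∉ H) : (embH H c).coeff g = 0 := by
  show Finsupp.mapDomain (H.subtype) c.coeff g = 0
  refine Finsupp.mapDomain_notin_range _ _ ?_
  rintro ⟨h, rfl⟩; exact hg h.2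

variable (E : (K × H) ≃ G) (hE : ∀ (t : K) (h : H), E (t, h) = ↑t * ↑h)
  (htriv : ∀ g : G, g ∈ H → g ∈ K → g = 1)

include hE htriv in
lemma mem_inducedCode_iff (C : Submodule (MonoidAlgebra F H) (MonoidAlgebra F H))
    [Fintype K] (u : MonoidAlgebra F G) :
    u ∈ inducedCode H C ↔ ∀ t : K, theta (F := F) K H E u t ∈ C := by
  constructor
  · intro hu
    refine Submodule.span_induction ?_ ?_ ?_ ?_ hu
    · rintro x ⟨c, hc, rfl⟩ t
      by_cases ht : t = 1
      · subst ht
        have : theta (F := F) K H E (embH H c) 1 = c := by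
          ext h
          rw [theta_apply, hE]
          simpa using embH_apply_coe c h
        rwa [this]
      · have : theta (F := F) K H E (embH H c) t = 0 := by
          ext h
          rw [theta_apply, hE]
          have : (↑t * ↑h : G) ∉ H := by
            intro hm
            have h1 : (↑t : G) ∈ H := by
              have := mul_mem hm (inv_mem h.2 : ((↑h)⁻¹ : G) ∈ H)
              simpa using this
            exact ht (Subtype.ext (htriv _ h1 t.2))
          simp [embH_apply_of_not_mem c this]
        rw [this]; exact C.zero_mem
    · intro t; simp only [map_zero, Finsupp.coe_zero, Pi.zero_apply]; exact C.zero_mem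
    · intro x y _ _ hx hy t
      rw [map_add]; exact C.add_mem (hx t) (hy t)
    · intro a x _ hx
      have : ∀ a : MonoidAlgebra F G, ∀ t : K, theta (F := F) K H E (a * x) t ∈ C := by
        intro a
        induction a using MonoidAlgebra.induction_linear with
        | zero =>
          intro t; rw [zero_mul, map_zero]
          simp only [Finsupp.coe_zero, Pi.zero_apply]; exact C.zero_mem
        | add f g hf hg =>
          intro t; rw [add_mul, map_add]; exact C.add_mem (hf t) (hg t)
        | single g r =>
          intro t
          set p := E.symm (g⁻¹ * ↑t) with hp
          have hgt : g⁻¹ * (↑t : G) = ↑p.1 * ↑p.2 := by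
            rw [← hE p.1 p.2]; simp [hp]
          have key : theta (F := F) K H E (MonoidAlgebra.single g r * x) t
              = MonoidAlgebra.single (p.2)⁻¹ r * theta (F := F) K H E x p.1 := by
            ext h
            rw [theta_apply, hE, MonoidAlgebra.coeff_single_mul_apply,
              MonoidAlgebra.coeff_single_mul_apply, theta_apply, hE]
            congr 1
            rw [← mul_assoc, hgt]
            push_cast
            group
          rw [key]
          have := C.smul_mem (MonoidAlgebra.single (p.2)⁻¹ r) (hx p.1)
          rwa [smul_eq_mul] at this
      exact fun t => by simpa [smul_eq_mul] using this a t
  · intro hu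
    have hsum : ∑ t : K, (MonoidAlgebra.single (↑t : G) (1 : F)
        * embH H (theta (F := F) K H E u t)) = u := by
      ext g
      obtain ⟨⟨t₀, h₀⟩, rfl⟩ := E.surjective g
      rw [MonoidAlgebra.coeff_sum, Finsupp.finset_sum_apply]
      rw [Finset.sum_eq_single t₀]
      · rw [MonoidAlgebra.coeff_single_mul_apply, one_mul, hE]
        have : ((↑t₀)⁻¹ * (↑t₀ * ↑h₀) : G) = ↑h₀ := by group
        rw [this, embH_apply_coe, theta_apply, hE]
      · intro t _ htne
        rw [MonoidAlgebra.coeff_single_mul_apply, one_mul, hE]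
        have hnm : ((↑t)⁻¹ * (↑t₀ * ↑h₀) : G) ∉ H := by
          intro hm
          have h1 : ((↑t)⁻¹ * ↑t₀ : G) ∈ H := by
            have := mul_mem hm (inv_mem h₀.2 : ((↑h₀)⁻¹ : G) ∈ H)
            simpa [mul_assoc] using this
          have h2 : ((↑t)⁻¹ * ↑t₀ : G) ∈ K := mul_mem (inv_mem t.2) t₀.2
          exact htne (Subtype.coe_injective (inv_mul_eq_one.mp (htriv _ h1 h2)))
        simp [embH_apply_of_not_mem _ hnm]
      · intro h; exact absurd (Finset.mem_univ t₀) h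
    rw [← hsum]
    refine Submodule.sum_mem _ fun t _ => ?_
    have : MonoidAlgebra.single (↑t : G) (1 : F) * embH H (theta (F := F) K H E u t)
        = MonoidAlgebra.single (↑t : G) (1 : F) • embH H (theta (F := F) K H E u t) := rfl
    rw [this]
    exact Submodule.smul_mem _ _ (Submodule.subset_span ⟨_, hu t, rfl⟩)

lemma support_card_eq (E : (K × H) ≃ G) [Fintype K] (u : MonoidAlgebra F G) :
    u.coeff.support.card = ∑ t : K, (theta (F := F) K H E u t).coeff.support.card := by
  classical
  rw [Finset.card_eq_sum_card_fiberwise (f := fun g => (E.symm g).1) (t := Finset.univ)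
    (fun x _ => Finset.mem_univ _)]
  refine Finset.sum_congr rfl fun t _ => ?_
  refine Finset.card_bij' (fun g _ => (E.symm g).2) (fun h _ => E (t, h)) ?_ ?_ ?_ ?_
  · intro g hg
    simp only [Finset.mem_filter, Finsupp.mem_support_iff] at hg ⊢
    rw [theta_apply]
    have : (t, (E.symm g).2) = E.symm g := Prod.ext hg.2.symm rfl
    rw [this, E.apply_symm_apply]
    exact hg.1
  · intro h hh
    simp only [Finsupp.mem_support_iff] at hh
    simp only [Finset.mem_filter, Finsupp.mem_support_iff, E.symm_apply_apply]
    rw [theta_apply] at hh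
    exact ⟨hh, trivial⟩
  · intro g hg
    simp only [Finset.mem_filter] at hg
    show E (t, (E.symm g).2) = g
    have : (t, (E.symm g).2) = E.symm g := Prod.ext hg.2.symm rfl
    rw [this, E.apply_symm_apply]
  · intro h _
    show (E.symm (E (t, h))).2 = h
    rw [E.symm_apply_apply]

include hE htriv in
lemma finrank_inducedCode_ge [Fintype K] [Fintype H] [Module.Finite F (MonoidAlgebra F G)]
    (C : Submodule (MonoidAlgebra F H) (MonoidAlgebra F H)) :
    Fintype.card K * Module.finrank F (C.restrictScalars F)
      ≤ Module.finrank F ((inducedCode H C).restrictScalars F) := by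
  classical
  haveI : Module.Finite F (MonoidAlgebra F H) :=
    Module.Finite.equiv ((Finsupp.linearEquivFunOnFinite F F H).symm.trans
      (MonoidAlgebra.coeffLinearEquiv F).symm)
  set C' := C.restrictScalars F
  let L0 : (K →₀ C') →ₗ[F] (K →₀ MonoidAlgebra F H) :=
    Finsupp.mapRange.linearMap C'.subtype
  let L1 : (K →₀ C') →ₗ[F] MonoidAlgebra F G :=
    ((theta (F := F) K H E).symm.toLinearMap).comp L0
  have hrange : ∀ f, L1 f ∈ (inducedCode H C).restrictScalars F := by
    intro f
    refine (mem_inducedCode_iff E hE htriv C _).mpr fun t => ?_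
    have : theta (F := F) K H E (L1 f) = L0 f := by
      simp [L1, LinearEquiv.apply_symm_apply]
    rw [this]
    have : L0 f t = ↑(f t) := by simp [L0]
    rw [this]
    exact (f t).2
  let L : (K →₀ C') →ₗ[F] ((inducedCode H C).restrictScalars F) :=
    L1.codRestrict _ hrange
  have hinj : Function.Injective L := by
    intro f g hfg
    have h1 : L1 f = L1 g := congrArg Subtype.val hfg
    have h2 : L0 f = L0 g := by
      have := congrArg (theta (F := F) K H E) h1
      simpa [L1, LinearEquiv.apply_symm_apply] using this
    exact Finsupp.mapRange_injective _ (map_zero _) (Submodule.injective_subtype C') h2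
  have hle := LinearMap.finrank_le_finrank_of_injective hinj
  have heq : Module.finrank F (K →₀ C') = Fintype.card K * Module.finrank F C' := by
    rw [LinearEquiv.finrank_eq (Finsupp.linearEquivFunOnFinite F _ _),
      Module.finrank_pi_fintype, Finset.sum_const, Finset.card_univ, smul_eq_mul]
  rw [heq] at hle
  exact hle

end Aux

/-- Let `G` be a finite group with subgroups `H₁, H₂` such that
`G = H₁H₂` and `H₁ ∩ H₂ = {e}`.  Let `C₁ ⊆ F_qH₁` and `C₂ ⊆ F_qH₂` be left codes and
`C = C₁^G ⊓ C₂^G`.  Then `d(C) ≥ d(C₁)·d(C₂)` and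
`dim C ≥ |H₁|·dim C₂ + |H₂|·dim C₁ − |G|`. -/
theorem intersection_induced_codes
    {F : Type*} [Field F] [Fintype F] {G : Type*} [Group G] [Fintype G]
    (H₁ H₂ : Subgroup G)
    (hprod : (H₁ : Set G) * (H₂ : Set G) = Set.univ)
    (hint : H₁ ⊓ H₂ = ⊥)
    (C₁ : Submodule (MonoidAlgebra F H₁) (MonoidAlgebra F H₁))
    (C₂ : Submodule (MonoidAlgebra F H₂) (MonoidAlgebra F H₂)) :
    dmin (MonoidAlgebra.coeff '' ((inducedCode H₁ C₁ ⊓ inducedCode H₂ C₂ :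
        Submodule (MonoidAlgebra F G) (MonoidAlgebra F G)) : Set (MonoidAlgebra F G))) ≥
      dmin (MonoidAlgebra.coeff '' (C₁ : Set (MonoidAlgebra F H₁))) *
        dmin (MonoidAlgebra.coeff '' (C₂ : Set (MonoidAlgebra F H₂))) ∧
    Module.finrank F
        ((inducedCode H₁ C₁ ⊓ inducedCode H₂ C₂).restrictScalars F) ≥
      Nat.card H₁ * Module.finrank F (C₂.restrictScalars F) +
        Nat.card H₂ * Module.finrank F (C₁.restrictScalars F) - Nat.card G := by
  classical
  haveI : Fintype ↥H₁ := Fintype.ofFinite _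
  haveI : Fintype ↥H₂ := Fintype.ofFinite _
  -- trivial-intersection facts
  have htriv₁ : ∀ g : G, g ∈ H₁ → g ∈ H₂ → g = 1 := by
    intro g h1 h2
    have : g ∈ H₁ ⊓ H₂ := ⟨h1, h2⟩
    rw [hint] at this
    exact Subgroup.mem_bot.mp this
  have htriv₂ : ∀ g : G, g ∈ H₂ → g ∈ H₁ → g = 1 := fun g h2 h1 => htriv₁ g h1 h2
  -- bijectivity of the product maps
  have hinj12 : Function.Injective (fun p : H₁ × H₂ => (↑p.1 * ↑p.2 : G)) := by
    rintro ⟨a₁, b₁⟩ ⟨a₂, b₂⟩ hab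
    simp only at hab
    have hm : ((↑a₂)⁻¹ * ↑a₁ : G) = ↑b₂ * (↑b₁)⁻¹ := by
      have h' : (↑a₁ : G) = ↑a₂ * ↑b₂ * (↑b₁)⁻¹ := by
        rw [eq_mul_inv_iff_mul_eq, hab]
      rw [h']; group
    have h1 : ((↑a₂)⁻¹ * ↑a₁ : G) ∈ H₁ := mul_mem (inv_mem a₂.2) a₁.2
    have h2 : ((↑a₂)⁻¹ * ↑a₁ : G) ∈ H₂ := hm ▸ mul_mem b₂.2 (inv_mem b₁.2)
    have ha : a₁ = a₂ := Subtype.coe_injective (inv_mul_eq_one.mp (htriv₁ _ h1 h2)).symm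
    subst ha
    have hb : (↑b₁ : G) = ↑b₂ := by
      have := hab
      exact mul_left_cancel this
    exact Prod.ext rfl (Subtype.coe_injective hb)
  have hsurj12 : Function.Surjective (fun p : H₁ × H₂ => (↑p.1 * ↑p.2 : G)) := by
    intro g
    have hg : g ∈ (H₁ : Set G) * (H₂ : Set G) := by rw [hprod]; trivial
    obtain ⟨a, ha, b, hb, rfl⟩ := hg
    exact ⟨(⟨a, ha⟩, ⟨b, hb⟩), rfl⟩
  have hinj21 : Function.Injective (fun p : H₂ × H₁ => (↑p.1 * ↑p.2 : G)) := by
    rintro ⟨b₁, a₁⟩ ⟨b₂, a₂⟩ hab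
    simp only at hab
    have hm : ((↑b₂)⁻¹ * ↑b₁ : G) = ↑a₂ * (↑a₁)⁻¹ := by
      have h' : (↑b₁ : G) = ↑b₂ * ↑a₂ * (↑a₁)⁻¹ := by
        rw [eq_mul_inv_iff_mul_eq, hab]
      rw [h']; group
    have h2 : ((↑b₂)⁻¹ * ↑b₁ : G) ∈ H₂ := mul_mem (inv_mem b₂.2) b₁.2
    have h1 : ((↑b₂)⁻¹ * ↑b₁ : G) ∈ H₁ := hm ▸ mul_mem a₂.2 (inv_mem a₁.2)
    have hb : b₁ = b₂ := Subtype.coe_injective (inv_mul_eq_one.mp (htriv₂ _ h2 h1)).symm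
    subst hb
    exact Prod.ext rfl (Subtype.coe_injective (mul_left_cancel hab))
  have hsurj21 : Function.Surjective (fun p : H₂ × H₁ => (↑p.1 * ↑p.2 : G)) := by
    intro g
    obtain ⟨⟨a, b⟩, hab⟩ := hsurj12 g⁻¹
    refine ⟨(b⁻¹, a⁻¹), ?_⟩
    simp only at hab ⊢
    push_cast
    rw [← mul_inv_rev, hab, inv_inv]
  set E₁ : (H₂ × H₁) ≃ G := Equiv.ofBijective _ ⟨hinj21, hsurj21⟩ with hE₁def
  set E₂ : (H₁ × H₂) ≃ G := Equiv.ofBijective _ ⟨hinj12, hsurj12⟩ with hE₂def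
  have hE₁ : ∀ (t : H₂) (h : H₁), E₁ (t, h) = ↑t * ↑h := fun _ _ => rfl
  have hE₂ : ∀ (t : H₁) (h : H₂), E₂ (t, h) = ↑t * ↑h := fun _ _ => rfl
  haveI : Module.Finite F (MonoidAlgebra F G) :=
    Module.Finite.equiv ((Finsupp.linearEquivFunOnFinite F F G).symm.trans
      (MonoidAlgebra.coeffLinearEquiv F).symm)
  constructor
  · -- distance bound
    rw [ge_iff_le, dmin]
    refine le_sInf ?_
    rintro w ⟨_, ⟨u, hu, rfl⟩, hu0, rfl⟩
    replace hu0 : u ≠ 0 := fun h => hu0 (by simp [h])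
    have huAB : u ∈ (inducedCode H₁ C₁ ⊓ inducedCode H₂ C₂ :
        Submodule (MonoidAlgebra F G) (MonoidAlgebra F G)) := hu
    have hcomp1 : ∀ t : H₂, theta (F := F) H₂ H₁ E₁ u t ∈ C₁ :=
      (mem_inducedCode_iff E₁ hE₁ htriv₁ C₁ u).mp ((Submodule.mem_inf (M := MonoidAlgebra F G)).mp huAB).1
    have hcomp2 : ∀ s : H₁, theta (F := F) H₁ H₂ E₂ u s ∈ C₂ :=
      (mem_inducedCode_iff E₂ hE₂ htriv₂ C₂ u).mp ((Submodule.mem_inf (M := MonoidAlgebra F G)).mp huAB).2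
    obtain ⟨t₀, ht₀⟩ : ∃ t₀ : H₂, theta (F := F) H₂ H₁ E₁ u t₀ ≠ 0 := by
      by_contra hall
      push_neg at hall
      apply hu0
      have hz : theta (F := F) H₂ H₁ E₁ u = 0 := Finsupp.ext fun t => by
        rw [hall t]; rfl
      exact (LinearEquiv.map_eq_zero_iff _).mp hz
    set S₀ : Finset ↥H₁ :=
      Finset.univ.filter (fun s => theta (F := F) H₁ H₂ E₂ u s ≠ 0) with hS₀
    -- the injection from supp (θ₁ u t₀) into S₀
    set φ : ↥H₁ → ↥H₁ := fun h => (E₂.symm (↑t₀ * ↑h)).1 with hφ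
    have hEdec : ∀ x : G, (↑(E₂.symm x).1 * ↑(E₂.symm x).2 : G) = x := by
      intro x
      rw [← hE₂]
      simp
    have hval : ∀ h : ↥H₁, (theta (F := F) H₁ H₂ E₂ u (φ h)).coeff ((E₂.symm (↑t₀ * ↑h)).2)
        = u.coeff (↑t₀ * ↑h) := by
      intro h
      rw [theta_apply, hE₂, hφ, hEdec]
    have hφmem : ∀ h ∈ (theta (F := F) H₂ H₁ E₁ u t₀).coeff.support, φ h ∈ S₀ := by
      intro h hh
      rw [Finsupp.mem_support_iff] at hh
      rw [theta_apply, hE₁] at hh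
      rw [hS₀, Finset.mem_filter]
      refine ⟨Finset.mem_univ _, fun h0 => ?_⟩
      have := hval h
      rw [h0] at this
      simp only [MonoidAlgebra.coeff_zero, Finsupp.coe_zero, Pi.zero_apply] at this
      exact hh this.symm
    have hφinj : Set.InjOn φ ↑(theta (F := F) H₂ H₁ E₁ u t₀).coeff.support := by
      intro h₁ _ h₂ _ heq
      have e₁ := hEdec (↑t₀ * ↑h₁)
      have e₂ := hEdec (↑t₀ * ↑h₂)
      rw [show (E₂.symm (↑t₀ * ↑h₁)).1 = φ h₁ from rfl] at e₁
      rw [show (E₂.symm (↑t₀ * ↑h₂)).1 = φ h₂ from rfl, ← heq] at e₂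
      set a := (E₂.symm (↑t₀ * ↑h₁)).2
      set b := (E₂.symm (↑t₀ * ↑h₂)).2
      have hab : ((↑a)⁻¹ * ↑b : G) = (↑h₁)⁻¹ * ↑h₂ := by
        have ha : (↑a : G) = (↑(φ h₁))⁻¹ * (↑t₀ * ↑h₁) := eq_inv_mul_of_mul_eq e₁
        have hb : (↑b : G) = (↑(φ h₁))⁻¹ * (↑t₀ * ↑h₂) := eq_inv_mul_of_mul_eq e₂
        rw [ha, hb]
        group
      have m2 : ((↑h₁)⁻¹ * ↑h₂ : G) ∈ H₂ := hab ▸ mul_mem (inv_mem a.2) b.2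
      have m1 : ((↑h₁)⁻¹ * ↑h₂ : G) ∈ H₁ := mul_mem (inv_mem h₁.2) h₂.2
      exact Subtype.coe_injective (inv_mul_eq_one.mp (htriv₁ _ m1 m2))
    have hcard : (theta (F := F) H₂ H₁ E₁ u t₀).coeff.support.card ≤ S₀.card :=
      Finset.card_le_card_of_injOn φ hφmem hφinj
    have c1 : dmin (MonoidAlgebra.coeff '' (C₁ : Set (MonoidAlgebra F H₁)))
        ≤ ((theta (F := F) H₂ H₁ E₁ u t₀).coeff.support.card : ℕ∞) :=
      sInf_le ⟨_, ⟨_, hcomp1 t₀, rfl⟩, mt MonoidAlgebra.coeff_eq_zero.mp ht₀, rfl⟩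
    calc dmin (MonoidAlgebra.coeff '' (C₁ : Set (MonoidAlgebra F H₁))) * dmin (MonoidAlgebra.coeff '' (C₂ : Set (MonoidAlgebra F H₂)))
        ≤ (S₀.card : ℕ∞) * dmin (MonoidAlgebra.coeff '' (C₂ : Set (MonoidAlgebra F H₂))) :=
          mul_le_mul' (c1.trans (Nat.cast_le.mpr hcard)) le_rfl
      _ = ∑ _s ∈ S₀, dmin (MonoidAlgebra.coeff '' (C₂ : Set (MonoidAlgebra F H₂))) := by
          rw [Finset.sum_const, nsmul_eq_mul]
      _ ≤ ∑ s ∈ S₀, ((theta (F := F) H₁ H₂ E₂ u s).coeff.support.card : ℕ∞) := by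
          refine Finset.sum_le_sum fun s hs => ?_
          exact sInf_le ⟨_, ⟨_, hcomp2 s, rfl⟩,
            mt MonoidAlgebra.coeff_eq_zero.mp (Finset.mem_filter.mp hs).2, rfl⟩
      _ ≤ ∑ s : ↥H₁, ((theta (F := F) H₁ H₂ E₂ u s).coeff.support.card : ℕ∞) :=
          Finset.sum_le_sum_of_subset (Finset.subset_univ _)
      _ = (u.coeff.support.card : ℕ∞) := by
          rw [support_card_eq E₂ u, Nat.cast_sum]
  · -- dimension bound
    have hA := finrank_inducedCode_ge E₁ hE₁ htriv₁ C₁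
    have hB := finrank_inducedCode_ge E₂ hE₂ htriv₂ C₂
    have hsum := Submodule.finrank_sup_add_finrank_inf_eq
      ((inducedCode H₁ C₁).restrictScalars F) ((inducedCode H₂ C₂).restrictScalars F)
    have htop : Module.finrank F
        ↥((inducedCode H₁ C₁).restrictScalars F ⊔ (inducedCode H₂ C₂).restrictScalars F)
        ≤ Fintype.card G := by
      have h1 := Submodule.finrank_le
        ((inducedCode H₁ C₁).restrictScalars F ⊔ (inducedCode H₂ C₂).restrictScalars F)
      have h2 : Module.finrank F (MonoidAlgebra F G) = Fintype.card G := by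
        have : Module.finrank F (G →₀ F) = Fintype.card G := Module.finrank_finsupp_self F
        exact (MonoidAlgebra.coeffLinearEquiv F).finrank_eq.trans this
      omega
    have hres : (inducedCode H₁ C₁ ⊓ inducedCode H₂ C₂).restrictScalars F
        = (inducedCode H₁ C₁).restrictScalars F ⊓ (inducedCode H₂ C₂).restrictScalars F := by
      ext x
      simp [Submodule.restrictScalars_mem, Submodule.mem_inf]
    rw [ge_iff_le, hres]
    rw [Nat.card_eq_fintype_card, Nat.card_eq_fintype_card, Nat.card_eq_fintype_card]
    omega
end
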